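/- arXiv:2510.21222 — 4 statements merged into one kernel-verified Lean document; each statement's English description precedes it below -/
import Mathlib

section
/- For every natural number k, the constant term of the Laurent polynomial ((x+y+1)^3/(xyz) + z)^(2k) in ℚ[x^{±1}, y^{±1}, z^{±1}] equals (2k)!·(3k)!/(k!)^5. -/
/-- The ring of Laurent polynomials in three variables over `ℚ`. -/
noncomputable abbrev Laurent3 : Type := AddMonoidAlgebra ℚ (Fin 3 → ℤ)

/-- The Laurent monomial `x_i`. -/
noncomputable def LX (i : Fin 3) : Laurent3 := AddMonoidAlgebra.single (Pi.single i 1) 1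

/-- The Laurent monomial `x_i⁻¹`. -/
noncomputable def LXinv (i : Fin 3) : Laurent3 := AddMonoidAlgebra.single (Pi.single i (-1)) 1

/-- The standard toric Landau–Ginzburg model `(x+y+1)^3/(xyz) + z` of the cubic threefold. -/
noncomputable def cubicLG : Laurent3 :=
  (LX 0 + LX 1 + 1) ^ 3 * LXinv 0 * LXinv 1 * LXinv 2 + LX 2

/-! Binomially, `cubicLG ^ (2k) = ∑_{i+j=2k} C(2k,i) (x+y+1)^(3i) x^(-i) y^(-i) z^(j-i)`. As `(x+y+1)^(3i)`
does not involve `z`, only `i = j = k` contributes to the constant term, namely `C(2k,k)` times the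
coefficient of `x^k y^k` in `(x+y+1)^(3k)`, which is `C(3k,2k) C(2k,k)`. -/

open Finset AddMonoidAlgebra Nat

theorem AddMonoidAlgebra.single_one_add_single_one_pow {R G : Type*} [CommSemiring R]
    [AddCommMonoid G] (a b : G) (n : ℕ) :
    (single a (1 : R) + single b 1) ^ n =
      ∑ q ∈ antidiagonal n, single (q.1 • a + q.2 • b) (n.choose q.1 : R) := by
  rw [(Commute.all _ _).add_pow']
  refine sum_congr rfl fun q _ => ?_
  simp [single_pow, single_mul_single, nsmul_eq_mul]

theorem coeff_LX_add_LX_pow (m i j : ℕ) :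
    ((LX 0 + LX 1) ^ m).coeff (i • Pi.single 0 1 + j • Pi.single 1 1) =
      if i + j = m then (m.choose i : ℚ) else 0 := by
  have hinj : ∀ q : ℕ × ℕ, (q.1 • Pi.single 0 1 + q.2 • Pi.single 1 1 : Fin 3 → ℤ) =
      i • Pi.single 0 1 + j • Pi.single 1 1 ↔ (i, j) = q := by
    rintro ⟨a, b⟩
    refine ⟨fun h => ?_, fun h => by rw [← h]⟩
    have ha : a = i := by simpa using congrFun h 0
    have hb : b = j := by simpa using congrFun h 1
    rw [ha, hb]
  simp only [LX, single_one_add_single_one_pow, coeff_sum, Finset.sum_apply', coeff_single,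
    Finsupp.single_apply, hinj]
  rw [sum_ite_eq]
  simp

theorem coeff_LX_add_LX_add_one_pow {n i j : ℕ} (h : i + j ≤ n) :
    ((LX 0 + LX 1 + 1) ^ n).coeff (i • Pi.single 0 1 + j • Pi.single 1 1) =
      (n.choose (i + j) * (i + j).choose i : ℚ) := by
  rw [(Commute.all _ _).add_pow', coeff_sum, Finset.sum_apply',
    Nat.sum_antidiagonal_eq_sum_range_succ_mk]
  simp only [one_pow, mul_one, coeff_smul, Finsupp.smul_apply, coeff_LX_add_LX_pow, smul_ite, smul_zero]
  rw [sum_ite_eq]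
  simp [Nat.lt_succ_iff.mpr h, nsmul_eq_mul]

theorem coeff_LX_add_LX_add_one_pow_of_apply_two_ne_zero (n : ℕ) {m : Fin 3 → ℤ} (hm : m 2 ≠ 0) :
    ((LX 0 + LX 1 + 1) ^ n).coeff m = 0 := by
  let zDeg : (Fin 3 → ℤ) →+ ℤ := Pi.evalAddMonoidHom _ 2
  have hLX : ∀ i : Fin 3, i ≠ 2 → LX i ∈ gradeBy ℚ zDeg 0 := fun i hi =>
    (mem_gradeBy_iff _ _ _ _).2 <| by simp [LX, coeff_single, zDeg, hi.symm]
  have hbase : LX 0 + LX 1 + 1 ∈ gradeBy ℚ zDeg 0 :=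
    add_mem (add_mem (hLX 0 (by decide)) (hLX 1 (by decide))) SetLike.GradedOne.one_mem
  have hpow := (mem_gradeBy_iff _ _ _ _).1 (by simpa using SetLike.pow_mem_graded n hbase)
  exact Finsupp.notMem_support_iff.1 fun hs => hm (hpow hs)

theorem cubicLG_eq :
    cubicLG = (LX 0 + LX 1 + 1) ^ 3 * single (-1) 1 + LX 2 := by
  have h : LXinv 0 * LXinv 1 * LXinv 2 = single (-1) 1 := by
    simp only [LXinv, single_mul_single, mul_one]
    congr 1
    funext s
    fin_cases s <;> simp
  rw [cubicLG, mul_assoc, mul_assoc, ← mul_assoc (LXinv 0), h]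

theorem cubicLG_pow (n : ℕ) :
    cubicLG ^ n = ∑ p ∈ antidiagonal n,
      (LX 0 + LX 1 + 1) ^ (3 * p.1) * single (p.2 • Pi.single 2 1 - p.1 • 1) (n.choose p.1 : ℚ) := by
  rw [cubicLG_eq, (Commute.all _ _).add_pow']
  refine sum_congr rfl fun p _ => ?_
  simp only [mul_pow, ← pow_mul, show LX 2 = single (Pi.single 2 1) 1 from rfl, single_pow, one_pow]
  rw [mul_assoc, single_mul_single, nsmul_eq_mul', mul_assoc, natCast_def, single_mul_single]
  congr 2
  · rw [add_zero, smul_neg, sub_eq_add_neg, add_comm]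
  · simp

theorem coeff_zero_cubicLG_pow (n : ℕ) :
    (cubicLG ^ n).coeff 0 = ∑ p ∈ antidiagonal n,
      n.choose p.1 * ((LX 0 + LX 1 + 1) ^ (3 * p.1)).coeff (p.1 • 1 - p.2 • Pi.single 2 1) := by
  rw [cubicLG_pow, coeff_sum, Finset.sum_apply']
  refine sum_congr rfl fun p _ => ?_
  rw [coeff_mul_single_apply, zero_add, neg_sub, mul_comm]

theorem choose_two_mul_sq_mul_choose_three_mul (k : ℕ) :
    ((2 * k).choose k : ℚ) * ((3 * k).choose (2 * k) * (2 * k).choose k) =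
      (2 * k)! * (3 * k)! / k ! ^ 5 := by
  rw [Nat.cast_choose ℚ (by omega : k ≤ 2 * k), Nat.cast_choose ℚ (by omega : 2 * k ≤ 3 * k),
    show 2 * k - k = k by omega, show 3 * k - 2 * k = k by omega]
  field_simp

/-- The constant term of `((x+y+1)^3/(xyz) + z)^(2k)` equals `(2k)!·(3k)!/(k!)^5`. -/
theorem constantTerm_cubicLG_even_pow (k : ℕ) :
    (cubicLG ^ (2 * k)).coeff 0 =
      ((Nat.factorial (2 * k) : ℚ) * (Nat.factorial (3 * k) : ℚ)) /
        ((Nat.factorial k : ℚ)) ^ 5 := by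
  rw [coeff_zero_cubicLG_pow, sum_eq_single_of_mem (k, k) (by simp [two_mul])]
  · have hexp : (k • 1 - k • Pi.single 2 1 : Fin 3 → ℤ) = k • Pi.single 0 1 + k • Pi.single 1 1 := by
      funext s
      fin_cases s <;> simp
    rw [hexp, coeff_LX_add_LX_add_one_pow (by omega), ← two_mul, choose_two_mul_sq_mul_choose_three_mul]
  · rintro ⟨i, j⟩ hij hne
    rw [coeff_LX_add_LX_add_one_pow_of_apply_two_ne_zero, mul_zero]
    rw [HasAntidiagonal.mem_antidiagonal] at hij
    have hij' : i ≠ j := by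
      rintro rfl
      exact hne (by rw [show i = k by omega])
    simpa [sub_eq_zero] using hij'
end

section
/- For every odd natural number m, the constant term of the Laurent polynomial ((x+y+1)^3/(xyz) + z)^m in ℚ[x^{±1}, y^{±1}, z^{±1}] is zero. -/
namespace AddMonoidAlgebra

section CommSemiring

variable {R G : Type*} [CommSemiring R] [AddMonoid G]

noncomputable def twist (χ : Multiplicative G →* R) : R[G] →ₐ[R] R[G] :=
  lift R R[G] G
    { toFun g := single g.toAdd (χ g)
      map_one' := by simp [one_def]
      map_mul' g h := by simp [single_mul_single] }

theorem twist_single (χ : Multiplicative G →* R) (g : G) (c : R) :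
    twist χ (single g c) = single g (c * χ (.ofAdd g)) := by
  simp [twist]

theorem coeff_twist (χ : Multiplicative G →* R) (p : R[G]) (g : G) :
    (twist χ p).coeff g = p.coeff g * χ (.ofAdd g) := by
  induction p using induction_linear with
  | zero => simp
  | add p q hp hq => simp [coeff_add, hp, hq, add_mul]
  | single h c =>
    rw [twist_single]
    by_cases hhg : h = g
    · subst hhg; simp [coeff_single]
    · simp [coeff_single, hhg]

end CommSemiring

theorem coeff_zero_pow_eq_zero_of_twist_eq_neg {R G : Type*} [CommRing R] [NoZeroDivisors R]
    [CharZero R] [AddMonoid G] (χ : Multiplicative G →* R) {f : R[G]} (hf : twist χ f = -f)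
    {m : ℕ} (hm : Odd m) : (f ^ m).coeff 0 = 0 := by
  have hfm : twist χ (f ^ m) = -f ^ m := by rw [map_pow, hf, hm.neg_pow]
  have h := coeff_twist χ (f ^ m) 0
  rw [hfm, coeff_neg, ofAdd_zero, map_one, mul_one] at h
  exact CharZero.neg_eq_self_iff.mp h

end AddMonoidAlgebra

open AddMonoidAlgebra

/-- Twisting by this character substitutes `-x_i` for `x_i`. -/
noncomputable def coordSign (K : Type*) [Field K] {ι : Type*} (i : ι) :
    Multiplicative (ι → ℤ) →* K where
  toFun g := (-1) ^ g.toAdd i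
  map_one' := by simp
  map_mul' g h := by simp [zpow_add₀]

theorem twist_coordSign_LX (i : Fin 3) :
    twist (coordSign ℚ 2) (LX i) = if i = 2 then -LX i else LX i := by
  fin_cases i <;> simp [LX, twist_single, coordSign]

theorem twist_coordSign_LXinv (i : Fin 3) :
    twist (coordSign ℚ 2) (LXinv i) = if i = 2 then -LXinv i else LXinv i := by
  fin_cases i <;> simp [LXinv, twist_single, coordSign]

theorem twist_coordSign_cubicLG : twist (coordSign ℚ 2) cubicLG = -cubicLG := by
  simp only [cubicLG, map_add, map_mul, map_pow, map_one, twist_coordSign_LX,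
    twist_coordSign_LXinv]
  simp only [Fin.isValue, Fin.reduceEq, if_false, if_true]
  ring

/-- For odd `m`, the constant term of `((x+y+1)^3/(xyz) + z)^m` vanishes. -/
theorem constantTerm_cubicLG_odd_pow (m : ℕ) (hm : Odd m) :
    (cubicLG ^ m).coeff 0 = 0 :=
  coeff_zero_pow_eq_zero_of_twist_eq_neg (coordSign ℚ 2) twist_coordSign_cubicLG hm
end

section
/- The formal power series I(t) = Σ_{k≥0} ((2k)!(3k)!/(k!)^5) t^{2k} in ℚ[[t]] is annihilated by the differential operator D^3 − 12 t^2 (3D+2)(3D+4)(D+1), where D = t·d/dt acts on formal power series. -/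
open PowerSeries

/-- The Euler derivation `D = t·d/dt` on `ℚ⟦t⟧`, acting by `D(t^n) = n·t^n`. -/
noncomputable def eulerD (f : PowerSeries ℚ) : PowerSeries ℚ :=
  PowerSeries.mk fun n => (n : ℚ) * PowerSeries.coeff n f

/-- The power series `I(t) = Σ_{k≥0} ((2k)!(3k)!/(k!)^5) t^{2k}`. -/
noncomputable def cubicPeriod : PowerSeries ℚ :=
  PowerSeries.mk fun n =>
    if n % 2 = 0 then
      ((Nat.factorial (2 * (n / 2)) : ℚ) * (Nat.factorial (3 * (n / 2)) : ℚ)) /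
        ((Nat.factorial (n / 2) : ℚ)) ^ 5
    else 0

/-!
The operator acts diagonally on monomials up to the shift by `t^2`: the coefficient of
`t^(n+2)` in `D^3 f − 12 t^2 (3D+2)(3D+4)(D+1) f` is
`(n+2)^3 a_(n+2) − 12 (3n+2)(3n+4)(n+1) a_n`. So `f` is annihilated exactly when its
coefficients satisfy this two-step recurrence and `a_1 = 0`. For `I(t)` the odd coefficients
vanish and the even ones `c_k = (2k)!(3k)!/(k!)^5` satisfy
`(k+1)^3 c_(k+1) = 6 (2k+1)(3k+1)(3k+2) c_k`, which is the recurrence at `n = 2k`.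
-/

@[simp]
lemma coeff_eulerD (f : ℚ⟦X⟧) (n : ℕ) : coeff n (eulerD f) = n * coeff n f :=
  coeff_mk _ _

@[simp]
lemma PowerSeries.coeff_ofNat_mul {R : Type*} [Semiring R] (a : ℕ) [a.AtLeastTwo]
    (f : R⟦X⟧) (n : ℕ) : coeff n ((ofNat(a) : R⟦X⟧) * f) = ofNat(a) * coeff n f := by
  rw [← map_ofNat C a, coeff_C_mul]

noncomputable def picardFuchs (f : ℚ⟦X⟧) : ℚ⟦X⟧ :=
  eulerD (eulerD (eulerD f)) -
    12 * X ^ 2 *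
      (3 * eulerD (3 * eulerD (eulerD f + f) + 4 * (eulerD f + f)) +
        2 * (3 * eulerD (eulerD f + f) + 4 * (eulerD f + f)))

lemma coeff_picardFuchs (f : ℚ⟦X⟧) (n : ℕ) :
    coeff n (picardFuchs f) =
      n ^ 3 * coeff n f -
        if 2 ≤ n then
          12 * (3 * (n - 2 : ℕ) + 2) * (3 * (n - 2 : ℕ) + 4) * ((n - 2 : ℕ) + 1) *
            coeff (n - 2) f
        else 0 := by
  rw [picardFuchs, mul_comm _ (X ^ 2), mul_assoc, map_sub, coeff_X_pow_mul']
  split_ifs <;> simp only [coeff_eulerD, coeff_ofNat_mul, map_add] <;> ring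

lemma picardFuchs_eq_zero_of_recurrence {f : ℚ⟦X⟧} (h₁ : coeff 1 f = 0)
    (hrec : ∀ n : ℕ, ((n : ℚ) + 2) ^ 3 * coeff (n + 2) f =
      12 * (3 * n + 2) * (3 * n + 4) * (n + 1) * coeff n f) :
    picardFuchs f = 0 := by
  ext n
  rw [coeff_picardFuchs, map_zero]
  rcases n with _ | _ | n
  · simp
  · simp [h₁]
  · rw [if_pos (by omega), show n + 1 + 1 - 2 = n by omega]
    push_cast
    linear_combination hrec n

noncomputable def cubicPeriodCoeff (k : ℕ) : ℚ :=
  (2 * k).factorial * (3 * k).factorial / k.factorial ^ 5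

lemma coeff_cubicPeriod_two_mul (k : ℕ) : coeff (2 * k) cubicPeriod = cubicPeriodCoeff k := by
  simp [cubicPeriod, cubicPeriodCoeff]

lemma coeff_cubicPeriod_two_mul_add_one (k : ℕ) : coeff (2 * k + 1) cubicPeriod = 0 := by
  simp [cubicPeriod, Nat.add_mod]

lemma cubicPeriodCoeff_succ (k : ℕ) :
    ((k : ℚ) + 1) ^ 3 * cubicPeriodCoeff (k + 1) =
      6 * (2 * k + 1) * (3 * k + 1) * (3 * k + 2) * cubicPeriodCoeff k := by
  have h2 : 2 * (k + 1) = 2 * k + 1 + 1 := by ring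
  have h3 : 3 * (k + 1) = 3 * k + 1 + 1 + 1 := by ring
  rw [cubicPeriodCoeff, cubicPeriodCoeff, h2, h3]
  simp only [Nat.factorial_succ]
  field_simp
  push_cast
  ring

lemma cubicPeriod_recurrence (n : ℕ) :
    ((n : ℚ) + 2) ^ 3 * coeff (n + 2) cubicPeriod =
      12 * (3 * n + 2) * (3 * n + 4) * (n + 1) * coeff n cubicPeriod := by
  obtain ⟨k, rfl | rfl⟩ := Nat.even_or_odd' n
  · rw [show 2 * k + 2 = 2 * (k + 1) by ring, coeff_cubicPeriod_two_mul,
      coeff_cubicPeriod_two_mul]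
    push_cast
    linear_combination 8 * cubicPeriodCoeff_succ k
  · rw [show 2 * k + 1 + 2 = 2 * (k + 1) + 1 by ring, coeff_cubicPeriod_two_mul_add_one,
      coeff_cubicPeriod_two_mul_add_one]
    ring

/-- `I(t)` is annihilated by the Picard–Fuchs operator
`D^3 − 12 t^2 (3D+2)(3D+4)(D+1)` of the mirror of the cubic threefold. -/
theorem cubicPeriod_picardFuchs :
    eulerD (eulerD (eulerD cubicPeriod)) -
      12 * (PowerSeries.X : PowerSeries ℚ) ^ 2 *
        (3 * eulerD (3 * eulerD (eulerD cubicPeriod + cubicPeriod) +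
              4 * (eulerD cubicPeriod + cubicPeriod)) +
          2 * (3 * eulerD (eulerD cubicPeriod + cubicPeriod) +
              4 * (eulerD cubicPeriod + cubicPeriod))) = 0 :=
  picardFuchs_eq_zero_of_recurrence
    (by simpa using coeff_cubicPeriod_two_mul_add_one 0) cubicPeriod_recurrence
end

section
/- Let α be a nonzero complex number with α ≠ −1 and set a = α^4. Consider the rational function f_a(x,y,z) = (x+y)(y+z)(z+1)(x+a)/(x·y·z). Then f_a(α^3, α^2, α) = (α+1)^4, and the point (α^3, α^2, α) is a critical point of f_a, i.e. all three partial derivatives ∂f_a/∂x, ∂f_a/∂y, ∂f_a/∂z vanish at (α^3, α^2, α). -/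
/-!
In each variable separately `f_a` has the shape `c · (t + p)(t + q)/t = c · (t + p + q + pq/t)`,
whose derivative `c · (1 - pq/t²)` vanishes exactly when `t² = pq`. For `x`, `y`, `z` these
conditions read `x² = ay`, `y² = xz`, `z² = y`, and the geometric progression
`(α³, α², α)` with `a = α⁴` satisfies all three.
-/

/-- The deformed toric Landau–Ginzburg model `f_a = (x+y)(y+z)(z+1)(x+a)/(xyz)`
of the Fano threefold `X_{2-12}`. -/
noncomputable def fLG (a x y z : ℂ) : ℂ :=
  (x + y) * (y + z) * (z + 1) * (x + a) / (x * y * z)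

section CriticalPoint

variable {𝕜 : Type*} [NontriviallyNormedField 𝕜]

theorem hasDerivAt_add_mul_add_div_self (p q : 𝕜) {t : 𝕜} (ht : t ≠ 0) :
    HasDerivAt (fun s => (s + p) * (s + q) / s) (1 - p * q / t ^ 2) t := by
  refine (((hasDerivAt_id' t).add_const p).fun_mul ((hasDerivAt_id' t).add_const q)).fun_div
    (hasDerivAt_id' t) ht |>.congr_deriv ?_
  field_simp
  ring

theorem deriv_const_mul_add_mul_add_div_self_eq_zero (c p q : 𝕜) {t : 𝕜} (ht : t ≠ 0)
    (hcrit : t ^ 2 = p * q) : deriv (fun s => c * ((s + p) * (s + q) / s)) t = 0 := by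
  rw [((hasDerivAt_add_mul_add_div_self p q ht).const_mul c).deriv, ← hcrit,
    div_self (pow_ne_zero 2 ht), sub_self, mul_zero]

end CriticalPoint

-- With `t / 0 = 0` both sides vanish whenever a denominator does, so no side conditions.
theorem fLG_eq_mul_x (a x y z : ℂ) :
    fLG a x y z = (y + z) * (z + 1) / (y * z) * ((x + y) * (x + a) / x) := by
  unfold fLG; ring

theorem fLG_eq_mul_y (a x y z : ℂ) :
    fLG a x y z = (z + 1) * (x + a) / (x * z) * ((y + x) * (y + z) / y) := by
  unfold fLG; ring

theorem fLG_eq_mul_z (a x y z : ℂ) :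
    fLG a x y z = (x + y) * (x + a) / (x * y) * ((z + y) * (z + 1) / z) := by
  unfold fLG; ring

theorem critical_point_X2_12_general (α : ℂ) (hα : α ≠ 0) (a : ℂ) (ha : a = α ^ 4) :
    fLG a (α ^ 3) (α ^ 2) α = (α + 1) ^ 4 ∧
    deriv (fun x => fLG a x (α ^ 2) α) (α ^ 3) = 0 ∧
    deriv (fun y => fLG a (α ^ 3) y α) (α ^ 2) = 0 ∧
    deriv (fun z => fLG a (α ^ 3) (α ^ 2) z) α = 0 := by
  subst ha
  refine ⟨?_, ?_, ?_, ?_⟩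
  · unfold fLG
    field_simp
    ring
  · simp only [fLG_eq_mul_x]
    exact deriv_const_mul_add_mul_add_div_self_eq_zero _ _ _ (pow_ne_zero 3 hα) (by ring)
  · simp only [fLG_eq_mul_y]
    exact deriv_const_mul_add_mul_add_div_self_eq_zero _ _ _ (pow_ne_zero 2 hα) (by ring)
  · simp only [fLG_eq_mul_z]
    exact deriv_const_mul_add_mul_add_div_self_eq_zero _ _ _ hα (by ring)

/-- For `α ≠ 0, −1` and `a = α^4`, the point `(α³, α², α)` is a critical point of `f_a`
with critical value `(α+1)^4`. -/
theorem critical_point_X2_12 (α : ℂ) (hα : α ≠ 0) (hα1 : α ≠ -1) (a : ℂ) (ha : a = α ^ 4) :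
    fLG a (α ^ 3) (α ^ 2) α = (α + 1) ^ 4 ∧
    deriv (fun x => fLG a x (α ^ 2) α) (α ^ 3) = 0 ∧
    deriv (fun y => fLG a (α ^ 3) y α) (α ^ 2) = 0 ∧
    deriv (fun z => fLG a (α ^ 3) (α ^ 2) z) α = 0 :=
  critical_point_X2_12_general α hα a ha
end
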